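/- For α a real number that is not a nonnegative integer, |binom(α, m)| is asymptotic to 1/|Γ(−α)·m^{1+α}| as m → ∞; in particular, for α ∈ [−1, −1/2], one has |binom(α,m)| = O(m^{−1−α}) with absolute implied constant, since Γ(−α) ≥ 1 on that range. -/

import Mathlib

open Filter

/-- The generalized binomial coefficient `binom(α, m) = α(α-1)⋯(α-m+1)/m!` over `ℝ`. -/
noncomputable def rbinom (α : ℝ) (m : ℕ) : ℝ :=
  (∏ j ∈ Finset.range m, (α - j)) / m.factorial

/-!
Euler's sequence `GammaSeq (-α) n = n^{-α} n! / ((-α)(-α+1)⋯(-α+n))` expresses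
`|binom(α, n+1)|` as `n^{-α} / ((n+1) |GammaSeq (-α) n|)`, so the ratio in question equals
`|Γ(-α)| / |GammaSeq (-α) n| · (n/(n+1))^{-α}`, which tends to `1` by Euler's limit formula.

For `-1 ≤ α ≤ 0` and `t = 1 + α ∈ [0, 1]`, `|binom(α, m)| = ∏_{j<m} (1 - t/(j+1))`, and each
factor is at most `((j+2)/(j+1))^{-t}` because `1 - t x ≤ e^{-t x} ≤ (1 + x)^{-t}`; the product
telescopes to `(m+1)^{-t}`, so the bound holds with `C = 1`.
-/

open Finset Real

lemma one_sub_mul_le_one_add_rpow_neg {t x : ℝ} (ht : 0 ≤ t) (hx : -1 < x) :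
    1 - t * x ≤ (1 + x) ^ (-t) := by
  have hx1 : 0 < 1 + x := by linarith
  calc 1 - t * x ≤ exp (-(t * x)) := by linarith [add_one_le_exp (-(t * x))]
    _ ≤ exp (log (1 + x) * (-t)) := by
      gcongr
      nlinarith [log_le_sub_one_of_pos hx1]
    _ = (1 + x) ^ (-t) := (rpow_def_of_pos hx1 _).symm

lemma prod_range_one_sub_div_le_rpow {t : ℝ} (ht₀ : 0 ≤ t) (ht₁ : t ≤ 1) (m : ℕ) :
    ∏ j ∈ range m, (1 - t / (j + 1)) ≤ ((m : ℝ) + 1) ^ (-t) := by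
  induction m with
  | zero => simp
  | succ m ih =>
    have hm : (0 : ℝ) < m + 1 := by positivity
    have hfactor : 0 ≤ 1 - t / (m + 1) := by
      rw [sub_nonneg, div_le_one hm]
      linarith [(Nat.cast_nonneg m : (0 : ℝ) ≤ m)]
    rw [prod_range_succ]
    calc (∏ j ∈ range m, (1 - t / (j + 1))) * (1 - t / (m + 1))
        ≤ ((m : ℝ) + 1) ^ (-t) * (1 - t / (m + 1)) := mul_le_mul_of_nonneg_right ih hfactor
      _ ≤ ((m : ℝ) + 1) ^ (-t) * (1 + 1 / (m + 1)) ^ (-t) := by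
        gcongr
        simpa [div_eq_mul_one_div t] using
          one_sub_mul_le_one_add_rpow_neg ht₀ (x := 1 / (m + 1)) (by linarith [one_div_pos.2 hm])
      _ = (((m + 1 : ℕ) : ℝ) + 1) ^ (-t) := by
        rw [← mul_rpow hm.le (by positivity)]
        congr 1
        push_cast
        field_simp

lemma rbinom_eq_prod (α : ℝ) (m : ℕ) :
    rbinom α m = ∏ j ∈ range m, (α - j) / (j + 1) := by
  rw [rbinom, prod_div_distrib, ← prod_range_add_one_eq_factorial]
  push_cast
  rfl

lemma abs_rbinom_le_rpow {α : ℝ} (h₁ : -1 ≤ α) (h₀ : α ≤ 0) (m : ℕ) :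
    |rbinom α m| ≤ ((m : ℝ) + 1) ^ (-1 - α) := by
  rw [rbinom_eq_prod, abs_prod, show -1 - α = -(1 + α) by ring]
  refine le_of_eq_of_le (prod_congr rfl fun j _ => ?_)
    (prod_range_one_sub_div_le_rpow (by linarith) (by linarith) m)
  have hj : (0 : ℝ) < j + 1 := by positivity
  rw [abs_div, abs_of_nonpos (by linarith [(Nat.cast_nonneg j : (0 : ℝ) ≤ j)]), abs_of_pos hj]
  field_simp
  ring

lemma abs_rbinom_succ_eq_rpow_div_GammaSeq (α : ℝ) {n : ℕ} (hn : n ≠ 0) :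
    |rbinom α (n + 1)| = (n : ℝ) ^ (-α) / ((n + 1) * |GammaSeq (-α) n|) := by
  have hpow : (0 : ℝ) < (n : ℝ) ^ (-α) := rpow_pos_of_pos (by positivity) _
  have hprod : |∏ j ∈ range (n + 1), (α - j)| = |∏ j ∈ range (n + 1), (-α + j)| := by
    rw [abs_prod, abs_prod]
    exact prod_congr rfl fun j _ => by rw [abs_sub_comm, neg_add_eq_sub]
  rw [rbinom, GammaSeq, abs_div, hprod, abs_div, abs_mul, abs_of_pos hpow, Nat.abs_cast,
    Nat.abs_cast, Nat.factorial_succ]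
  push_cast
  field_simp

theorem tendsto_abs_rbinom_mul_abs_Gamma_mul_rpow {α : ℝ} (hΓ : Gamma (-α) ≠ 0) :
    Tendsto (fun m : ℕ => |rbinom α m| * |Gamma (-α) * (m : ℝ) ^ (1 + α)|)
      atTop (nhds 1) := by
  rw [← tendsto_add_atTop_iff_nat 1]
  have hlim : Tendsto
      (fun n : ℕ => |Gamma (-α)| / |GammaSeq (-α) n| * ((n : ℝ) / (n + 1)) ^ (-α))
      atTop (nhds 1) := by
    simpa [hΓ] using ((tendsto_const_nhds (x := |Gamma (-α)|)).div
      (GammaSeq_tendsto_Gamma (-α)).abs (abs_ne_zero.2 hΓ)).mul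
      ((tendsto_natCast_div_add_atTop (1 : ℝ)).rpow_const (p := -α) (Or.inl one_ne_zero))
  refine hlim.congr' ?_
  filter_upwards [eventually_ne_atTop 0] with n hn
  have hn' : (0 : ℝ) < n := by positivity
  rw [abs_rbinom_succ_eq_rpow_div_GammaSeq α hn]
  push_cast
  rw [abs_mul, abs_of_pos (rpow_pos_of_pos (by positivity) _), rpow_add (by positivity),
    rpow_one, div_rpow hn'.le (by positivity), rpow_neg (x := (n : ℝ) + 1) (by positivity)]
  field_simp

/-- For `α` a real number that is not a nonnegative integer, `|binom(α, m)|` is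
asymptotic to `1/|Γ(-α)·m^{1+α}|` as `m → ∞` (i.e., their ratio tends to `1`);
in particular, for `α ∈ [-1, -1/2]` one has `|binom(α, m)| ≤ C·m^{-1-α}` for all
`m ≥ 1`, with an absolute constant `C` (independent of `α`). -/
theorem abs_rbinom_asymptotic :
    (∀ α : ℝ, (¬ ∃ n : ℕ, α = n) →
      Tendsto (fun m : ℕ => |rbinom α m| * |Real.Gamma (-α) * (m : ℝ) ^ (1 + α)|)
        atTop (nhds 1)) ∧
    (∃ C : ℝ, ∀ α ∈ Set.Icc (-1 : ℝ) (-(1 / 2)), ∀ m : ℕ, 1 ≤ m →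
      |rbinom α m| ≤ C * (m : ℝ) ^ (-1 - α)) := by
  refine ⟨fun α hα => tendsto_abs_rbinom_mul_abs_Gamma_mul_rpow
    (Gamma_ne_zero fun n h => hα ⟨n, by linarith⟩), 1, fun α ⟨h₁, h₂⟩ m hm => ?_⟩
  rw [one_mul]
  exact (abs_rbinom_le_rpow h₁ (by linarith) m).trans
    (rpow_le_rpow_of_nonpos (by positivity) (by linarith) (by linarith))
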